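/- arXiv:1408.6973 — 3 statements merged into one kernel-verified Lean document; each statement's English description precedes it below -/
import Mathlib

section
/- If β is a nonsingular symmetric n×n real matrix and there exists N* with N*_i > 0 for all i such that K = β N*, and if the equilibrium N* of the Lotka-Volterra system is locally asymptotically stable, then β is positive definite. -/
/-!
The Jacobian is `-D β` with `D = diag a`, `a > 0`. With `S = diag √a`, the matrix `D β = S (S β S) S⁻¹`
is similar to the symmetric matrix `S β S`, so stability says that the real eigenvalues of `S β S`
are positive, i.e. `S β S` is positive definite. Since `S` is invertible and symmetric, the
congruent matrix `β` is positive definite too.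
-/

open Matrix
open scoped ComplexOrder

theorem spectrum.units_mul_comm {R A : Type*} [CommSemiring R] [Ring A] [Algebra R A]
    (u : Aˣ) (b : A) : spectrum R (↑u * b) = spectrum R (b * ↑u) := by
  rw [← spectrum.units_conjugate' (u := u) (a := ↑u * b)]
  simp

namespace Matrix

variable {n : Type*} [Fintype n] [DecidableEq n]

theorem map_mem_spectrum_map {K L : Type*} [Field K] [Field L] (f : K →+* L)
    {A : Matrix n n K} {t : K} (ht : t ∈ spectrum K A) : f t ∈ spectrum L (A.map f) := by
  rw [mem_spectrum_iff_isRoot_charpoly] at ht ⊢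
  rw [charpoly_map]
  exact ht.map

theorem IsHermitian.posDef_of_spectrum_pos {𝕜 : Type*} [RCLike 𝕜] {A : Matrix n n 𝕜}
    (hA : A.IsHermitian) (h : ∀ t ∈ spectrum ℝ A, 0 < t) : A.PosDef :=
  hA.posDef_iff_eigenvalues_pos.mpr fun i => h _ (hA.eigenvalues_mem_spectrum_real i)

theorem IsHermitian.posDef_of_spectrum_diagonal_mul_pos {A : Matrix n n ℝ} (hA : A.IsHermitian)
    {d : n → ℝ} (hd : ∀ i, 0 < d i) (h : ∀ t ∈ spectrum ℝ (diagonal d * A), 0 < t) :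
    A.PosDef := by
  set S : Matrix n n ℝ := diagonal fun i => √(d i)
  have hS : IsUnit S := isUnit_diagonal.mpr <| Pi.isUnit_iff.mpr fun i =>
    (Real.sqrt_pos.mpr (hd i)).ne'.isUnit
  have hSS : S * S = diagonal d := by
    simp only [S, diagonal_mul_diagonal, Real.mul_self_sqrt (hd _).le]
  have hSstar : Sᴴ = S := by simp [S]
  have hspec : spectrum ℝ (diagonal d * A) = spectrum ℝ (S * A * S) := by
    rw [← hSS, mul_assoc, ← hS.unit_spec, spectrum.units_mul_comm]
  rw [← hS.posDef_star_right_conjugate_iff]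
  refine (isHermitian_mul_mul_conjTranspose S hA).posDef_of_spectrum_pos fun t ht => h t ?_
  rw [hSstar] at ht
  rwa [hspec]

end Matrix

theorem stability_implies_posDef_general {n : ℕ} (β : Matrix (Fin n) (Fin n) ℝ)
    (hH : β.IsHermitian)
    (r K Nstar : Fin n → ℝ)
    (hr : ∀ i, 0 < r i) (hK : ∀ i, 0 < K i) (hNs : ∀ i, 0 < Nstar i)
    (hstab : ∀ μ : ℂ,
      μ ∈ spectrum ℂ
        (((-(Matrix.diagonal fun i => r i / K i * Nstar i)) * β).map (fun x => (x : ℂ))) →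
      μ.re < 0) :
    β.PosDef := by
  have ha : ∀ i, 0 < r i / K i * Nstar i := fun i =>
    mul_pos (div_pos (hr i) (hK i)) (hNs i)
  refine hH.posDef_of_spectrum_diagonal_mul_pos ha fun t ht => ?_
  have hneg : -(t : ℂ) ∈ spectrum ℂ
      (((-(Matrix.diagonal fun i => r i / K i * Nstar i)) * β).map (fun x => (x : ℂ))) := by
    rw [neg_mul, Matrix.map_neg _ Complex.ofReal_neg, ← spectrum.neg_eq]
    exact Set.neg_mem_neg.mpr (map_mem_spectrum_map Complex.ofRealHom ht)
  simpa using hstab _ hneg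

/-- If `β` is symmetric and nonsingular, there is a strictly positive equilibrium
`N*` with `K = β N*`, and the equilibrium is locally asymptotically stable
(all eigenvalues of the Jacobian `J = -D(a) β`, `a_i = (r_i/K_i) N*_i`, have
strictly negative real part), then `β` is positive definite. -/
theorem stability_implies_posDef {n : ℕ} (β : Matrix (Fin n) (Fin n) ℝ)
    (hH : β.IsHermitian) (hns : IsUnit β.det)
    (r K Nstar : Fin n → ℝ)
    (hr : ∀ i, 0 < r i) (hK : ∀ i, 0 < K i) (hNs : ∀ i, 0 < Nstar i)
    (heq : β.mulVec Nstar = K)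
    (hstab : ∀ μ : ℂ,
      μ ∈ spectrum ℂ
        (((-(Matrix.diagonal fun i => r i / K i * Nstar i)) * β).map (fun x => (x : ℂ))) →
      μ.re < 0) :
    β.PosDef :=
  stability_implies_posDef_general β hH r K Nstar hr hK hNs hstab
end

section
/- Let β be a symmetric positive definite n×n real matrix with β_ii = 1, and suppose there exists N* with N*_i > 0 and K = β N*. Then the function V(N) = Σ_i d_i (N_i - N*_i - N*_i log(N_i/N*_i)) with d_i = K_i/r_i > 0 satisfies: V(N) ≥ 0 on the strictly positive orthant, V(N) = 0 iff N = N*, and dV/dt along trajectories of the Lotka-Volterra system equals -Σ_{i,j} N_i' β_ij N_j' where N'_i = N_i - N*_i... in particular dV/dt < 0 whenever N ≠ N* in the strictly positive orthant. -/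
/-!
The function `x ↦ x - a - a log (x / a)` is `a (t - 1 - log t)` with `t = x / a`, so
`log t ≤ t - 1`, with equality only at `t = 1`, makes every summand of `V` nonnegative and
zero only at `N*`. Along trajectories the weights `d i = K i / r i` cancel the factors
`r i / K i`, and substituting `K = β N*` turns `dV/dt` into the negative quadratic form
`-(N - N*)ᵀ β (N - N*)`, which is negative away from `N*` since `β` is positive definite.
-/

open Finset Matrix Real

namespace Real

theorem sub_sub_mul_log_div_nonneg {x a : ℝ} (hx : 0 < x) (ha : 0 < a) :
    0 ≤ x - a - a * log (x / a) := by
  have h := mul_le_mul_of_nonneg_left (log_le_sub_one_of_pos (div_pos hx ha)) ha.le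
  rw [mul_sub, mul_div_cancel₀ x ha.ne', mul_one] at h
  linarith

theorem sub_sub_mul_log_div_pos {x a : ℝ} (hx : 0 < x) (ha : 0 < a) (hxa : x ≠ a) :
    0 < x - a - a * log (x / a) := by
  have hne : x / a ≠ 1 := by rwa [ne_eq, div_eq_one_iff_eq ha.ne']
  have h := mul_lt_mul_of_pos_left (log_lt_sub_one_of_pos (div_pos hx ha) hne) ha
  rw [mul_sub, mul_div_cancel₀ x ha.ne', mul_one] at h
  linarith

theorem sub_sub_mul_log_div_eq_zero_iff {x a : ℝ} (hx : 0 < x) (ha : 0 < a) :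
    x - a - a * log (x / a) = 0 ↔ x = a := by
  refine ⟨fun h => by_contra fun hxa => (sub_sub_mul_log_div_pos hx ha hxa).ne' h, ?_⟩
  rintro rfl
  rw [div_self ha.ne', log_one]
  ring

end Real

section Goh

variable {ι : Type*} [Fintype ι]

noncomputable def gohLyapunov (d Nstar N : ι → ℝ) : ℝ :=
  ∑ i, d i * (N i - Nstar i - Nstar i * log (N i / Nstar i))

variable {d Nstar N : ι → ℝ}

theorem gohLyapunov_nonneg (hd : ∀ i, 0 < d i) (hNs : ∀ i, 0 < Nstar i) (hN : ∀ i, 0 < N i) :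
    0 ≤ gohLyapunov d Nstar N :=
  sum_nonneg fun i _ => mul_nonneg (hd i).le (sub_sub_mul_log_div_nonneg (hN i) (hNs i))

theorem gohLyapunov_eq_zero_iff (hd : ∀ i, 0 < d i) (hNs : ∀ i, 0 < Nstar i)
    (hN : ∀ i, 0 < N i) : gohLyapunov d Nstar N = 0 ↔ N = Nstar := by
  rw [gohLyapunov, sum_eq_zero_iff_of_nonneg fun i _ =>
    mul_nonneg (hd i).le (sub_sub_mul_log_div_nonneg (hN i) (hNs i))]
  simp only [mem_univ, true_implies, mul_eq_zero, (hd _).ne', false_or,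
    sub_sub_mul_log_div_eq_zero_iff (hN _) (hNs _), funext_iff]

end Goh

namespace Matrix

variable {ι : Type*} [Fintype ι]

theorem sum_sub_mul_sub_mulVec_eq_neg_quadratic {β : Matrix ι ι ℝ} {Nstar K : ι → ℝ}
    (heq : β *ᵥ Nstar = K) (N : ι → ℝ) :
    ∑ i, (N i - Nstar i) * (K i - ∑ j, β i j * N j)
      = -∑ i, ∑ j, (N i - Nstar i) * β i j * (N j - Nstar j) := by
  subst heq
  simp only [mulVec, dotProduct, ← sum_sub_distrib, mul_sum, ← sum_neg_distrib]
  exact sum_congr rfl fun i _ => sum_congr rfl fun j _ => by ring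

theorem PosDef.sum_sum_mul_mul_pos {β : Matrix ι ι ℝ} (hβ : β.PosDef) {x : ι → ℝ} (hx : x ≠ 0) :
    0 < ∑ i, ∑ j, x i * β i j * x j := by
  simpa [dotProduct, mulVec, mul_sum, mul_assoc] using hβ.dotProduct_mulVec_pos hx

end Matrix

theorem lv_lyapunov_function_general {n : ℕ} (β : Matrix (Fin n) (Fin n) ℝ)
    (hpd : β.PosDef)
    (r K Nstar : Fin n → ℝ)
    (hr : ∀ i, 0 < r i) (hK : ∀ i, 0 < K i) (hNs : ∀ i, 0 < Nstar i)
    (heq : β.mulVec Nstar = K) :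
    let d : Fin n → ℝ := fun i => K i / r i
    let V : (Fin n → ℝ) → ℝ := fun N =>
      ∑ i, d i * (N i - Nstar i - Nstar i * Real.log (N i / Nstar i))
    (∀ i, 0 < d i) ∧
    (∀ N : Fin n → ℝ, (∀ i, 0 < N i) → 0 ≤ V N) ∧
    (∀ N : Fin n → ℝ, (∀ i, 0 < N i) → (V N = 0 ↔ N = Nstar)) ∧
    (∀ N : Fin n → ℝ,
      ∑ i, d i * (r i / K i) * (N i - Nstar i) * (K i - ∑ j, β i j * N j)
        = -∑ i, ∑ j, (N i - Nstar i) * β i j * (N j - Nstar j)) ∧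
    (∀ N : Fin n → ℝ, (∀ i, 0 < N i) → N ≠ Nstar →
      ∑ i, d i * (r i / K i) * (N i - Nstar i) * (K i - ∑ j, β i j * N j) < 0) := by
  intro d V
  have hd : ∀ i, 0 < d i := fun i => div_pos (hK i) (hr i)
  have hdV : ∀ N : Fin n → ℝ,
      ∑ i, d i * (r i / K i) * (N i - Nstar i) * (K i - ∑ j, β i j * N j)
        = -∑ i, ∑ j, (N i - Nstar i) * β i j * (N j - Nstar j) := by
    intro N
    have hcancel : ∀ i, d i * (r i / K i) = 1 := fun i =>
      (div_mul_div_cancel₀ (hr i).ne').trans (div_self (hK i).ne')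
    simp only [hcancel, one_mul]
    exact sum_sub_mul_sub_mulVec_eq_neg_quadratic heq N
  refine ⟨hd, fun N hN => gohLyapunov_nonneg hd hNs hN,
    fun N hN => gohLyapunov_eq_zero_iff hd hNs hN, hdV, fun N hN hne => ?_⟩
  rw [hdV, neg_lt_zero]
  exact hpd.sum_sum_mul_mul_pos (sub_ne_zero.mpr hne)

/-- Goh's Lyapunov function for the Lotka-Volterra competition system with a
symmetric positive definite competition matrix: `V ≥ 0` on the positive orthant,
`V = 0` iff `N = N*`, the derivative along trajectories equals the negative
quadratic form, and it is strictly negative away from `N*`. -/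
theorem lv_lyapunov_function {n : ℕ} (β : Matrix (Fin n) (Fin n) ℝ)
    (hH : β.IsHermitian) (hpd : β.PosDef) (hdiag : ∀ i, β i i = 1)
    (r K Nstar : Fin n → ℝ)
    (hr : ∀ i, 0 < r i) (hK : ∀ i, 0 < K i) (hNs : ∀ i, 0 < Nstar i)
    (heq : β.mulVec Nstar = K) :
    let d : Fin n → ℝ := fun i => K i / r i
    let V : (Fin n → ℝ) → ℝ := fun N =>
      ∑ i, d i * (N i - Nstar i - Nstar i * Real.log (N i / Nstar i))
    (∀ i, 0 < d i) ∧
    (∀ N : Fin n → ℝ, (∀ i, 0 < N i) → 0 ≤ V N) ∧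
    (∀ N : Fin n → ℝ, (∀ i, 0 < N i) → (V N = 0 ↔ N = Nstar)) ∧
    (∀ N : Fin n → ℝ,
      ∑ i, d i * (r i / K i) * (N i - Nstar i) * (K i - ∑ j, β i j * N j)
        = -∑ i, ∑ j, (N i - Nstar i) * β i j * (N j - Nstar j)) ∧
    (∀ N : Fin n → ℝ, (∀ i, 0 < N i) → N ≠ Nstar →
      ∑ i, d i * (r i / K i) * (N i - Nstar i) * (K i - ∑ j, β i j * N j) < 0) :=
  lv_lyapunov_function_general β hpd r K Nstar hr hK hNs heq
end

section
/- In the mean-field case β = (1-μ)I + μJ with 0 ≤ μ < 1, a carrying capacity vector K with K_i > 0 yields a strictly positive equilibrium N* = β^{-1} K if and only if for every i: (1 + (n-2)μ) K_i > μ Σ_{j≠i} K_j. In particular, if η denotes the deviation of K from the all-ones structural vector, sufficiently small η guarantees feasibility, and the feasible range shrinks as μ → 1. -/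
/-!
Since `J² = nJ`, the matrix `β(μ) = (1 - μ)I + μJ` has inverse `(I - μ/(1 + (n-1)μ) J)/(1 - μ)`,
so `N*_i > 0` iff `μ Σ_j K_j < (1 + (n-1)μ) K_i`; moving `K_i` out of the sum gives the stated
criterion. The feasible set is a finite intersection of open half-spaces containing the all-ones
vector, hence contains a neighbourhood of it. Finally `μ / (1 + (n-1)μ)` is increasing in `μ`,
so feasibility for `μ'` implies feasibility for every `μ ≤ μ'`.
-/

open Matrix Finset

theorem exists_pos_forall_abs_sub_lt_mulVec_pos {ι κ : Type*} [Fintype ι] [Finite κ]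
    (A : Matrix κ ι ℝ) {v : ι → ℝ} (hv : ∀ i, 0 < (A *ᵥ v) i) :
    ∃ ε > 0, ∀ K : ι → ℝ, (∀ j, |K j - v j| < ε) → ∀ i, 0 < (A *ᵥ K) i := by
  have hopen : IsOpen {K : ι → ℝ | ∀ i, 0 < (A *ᵥ K) i} := by
    simp only [Set.ofPred_forall]
    exact isOpen_iInter_of_finite fun i => isOpen_lt continuous_const
      ((continuous_apply i).comp (continuous_const.matrix_mulVec continuous_id))
  obtain ⟨ε, hε, hball⟩ := Metric.isOpen_iff.mp hopen v hv
  refine ⟨ε, hε, fun K hK => hball ?_⟩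
  rw [Metric.mem_ball, dist_pi_lt_iff hε]
  simpa only [Real.dist_eq] using hK

section AllOnes

variable {l m n α : Type*} [Fintype m] [NonAssocSemiring α]

theorem of_one_mul_of_one :
    (of 1 : Matrix l m α) * (of 1 : Matrix m n α) = (Fintype.card m : α) • of 1 := by
  ext; simp [mul_apply]

theorem of_one_mulVec (v : m → α) : (of 1 : Matrix l m α) *ᵥ v = fun _ => ∑ j, v j := by
  ext; simp [mulVec, dotProduct]

end AllOnes

section MeanField

variable {ι 𝕜 : Type*} [Fintype ι] [DecidableEq ι] [Field 𝕜]

variable (ι) in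
def meanFieldMatrix (m : 𝕜) : Matrix ι ι 𝕜 :=
  (1 - m) • 1 + m • of 1

theorem meanFieldMatrix_mul_of_one (m : 𝕜) :
    meanFieldMatrix ι m * of 1 = (1 + (Fintype.card ι - 1) * m) • (of 1 : Matrix ι ι 𝕜) := by
  rw [meanFieldMatrix, add_mul, smul_mul, one_mul, smul_mul, of_one_mul_of_one, smul_smul,
    ← add_smul]
  ring_nf

theorem meanFieldMatrix_inv {m : 𝕜} (hm : m ≠ 1) (hD : 1 + (Fintype.card ι - 1) * m ≠ 0) :
    (meanFieldMatrix ι m)⁻¹ =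
      (1 - m)⁻¹ • (1 - (m / (1 + (Fintype.card ι - 1) * m)) • (of 1 : Matrix ι ι 𝕜)) := by
  apply inv_eq_right_inv
  rw [Matrix.mul_smul, mul_sub, mul_one, Matrix.mul_smul, meanFieldMatrix_mul_of_one, smul_smul,
    div_mul_cancel₀ _ hD, meanFieldMatrix, add_sub_cancel_right, smul_smul,
    inv_mul_cancel₀ (sub_ne_zero.mpr hm.symm), one_smul]

theorem meanFieldMatrix_inv_mulVec_apply {m : 𝕜} (hm : m ≠ 1)
    (hD : 1 + (Fintype.card ι - 1) * m ≠ 0) (K : ι → 𝕜) (i : ι) :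
    ((meanFieldMatrix ι m)⁻¹ *ᵥ K) i =
      (K i - m / (1 + (Fintype.card ι - 1) * m) * ∑ j, K j) / (1 - m) := by
  rw [meanFieldMatrix_inv hm hD, smul_mulVec, sub_mulVec, one_mulVec, smul_mulVec,
    of_one_mulVec]
  simp only [Pi.smul_apply, Pi.sub_apply, smul_eq_mul]
  ring

end MeanField

section Feasibility

variable {ι : Type*} [Fintype ι]

theorem one_add_card_sub_one_mul_pos {m : ℝ} (hm0 : 0 ≤ m) (hm1 : m < 1) :
    0 < 1 + ((Fintype.card ι : ℝ) - 1) * m := by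
  nlinarith [mul_nonneg (Nat.cast_nonneg (Fintype.card ι) : (0 : ℝ) ≤ _) hm0]

variable [DecidableEq ι]

theorem mul_sum_lt_iff_mul_sum_erase_lt (c m : ℝ) (K : ι → ℝ) (i : ι) :
    m * ∑ j, K j < (1 + (c - 1) * m) * K i ↔
      m * ∑ j ∈ univ.erase i, K j < (1 + (c - 2) * m) * K i := by
  rw [← add_sum_erase _ _ (mem_univ i)]
  constructor <;> intro h <;> linarith

theorem meanFieldMatrix_inv_mulVec_pos_iff {m : ℝ} (hm0 : 0 ≤ m) (hm1 : m < 1)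
    (K : ι → ℝ) (i : ι) :
    0 < ((meanFieldMatrix ι m)⁻¹ *ᵥ K) i ↔
      m * ∑ j, K j < (1 + ((Fintype.card ι : ℝ) - 1) * m) * K i := by
  have hD := one_add_card_sub_one_mul_pos (ι := ι) hm0 hm1
  rw [meanFieldMatrix_inv_mulVec_apply hm1.ne hD.ne', div_pos_iff_of_pos_right (by linarith),
    sub_pos, div_mul_eq_mul_div, div_lt_iff₀' hD]

theorem meanFieldMatrix_inv_mulVec_one_pos {m : ℝ} (hm0 : 0 ≤ m) (hm1 : m < 1) (i : ι) :
    0 < ((meanFieldMatrix ι m)⁻¹ *ᵥ 1) i := by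
  rw [meanFieldMatrix_inv_mulVec_pos_iff hm0 hm1]
  simp only [Pi.one_apply, sum_const, card_univ, nsmul_one]
  linarith

theorem meanFieldMatrix_inv_mulVec_pos_of_le {m m' : ℝ} (hm0 : 0 ≤ m) (hmm' : m ≤ m')
    (hm'1 : m' < 1) {K : ι → ℝ} (hK : ∀ j, 0 ≤ K j) {i : ι}
    (h : 0 < ((meanFieldMatrix ι m')⁻¹ *ᵥ K) i) : 0 < ((meanFieldMatrix ι m)⁻¹ *ᵥ K) i := by
  rw [meanFieldMatrix_inv_mulVec_pos_iff (hm0.trans hmm') hm'1] at h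
  rw [meanFieldMatrix_inv_mulVec_pos_iff hm0 (hmm'.trans_lt hm'1)]
  have hD := one_add_card_sub_one_mul_pos (ι := ι) hm0 (hmm'.trans_lt hm'1)
  have hD' := one_add_card_sub_one_mul_pos (ι := ι) (hm0.trans hmm') hm'1
  set c := (Fintype.card ι : ℝ)
  set S := ∑ j, K j
  have hS : 0 ≤ S := sum_nonneg fun j _ => hK j
  -- `m (1 + (c-1)m') - m' (1 + (c-1)m) = m - m' ≤ 0`
  have hcross : m * S * (1 + (c - 1) * m') ≤ m' * S * (1 + (c - 1) * m) := by
    nlinarith [mul_nonneg (sub_nonneg.2 hmm') hS]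
  refine lt_of_mul_lt_mul_right ?_ hD'.le
  calc m * S * (1 + (c - 1) * m') ≤ m' * S * (1 + (c - 1) * m) := hcross
    _ < (1 + (c - 1) * m') * K i * (1 + (c - 1) * m) := mul_lt_mul_of_pos_right h hD
    _ = (1 + (c - 1) * m) * K i * (1 + (c - 1) * m') := by ring

end Feasibility

theorem mean_field_feasibility_general {n : ℕ} (μ : ℝ)
    (hμ0 : 0 ≤ μ) (hμ1 : μ < 1) :
    let betaOf : ℝ → Matrix (Fin n) (Fin n) ℝ := fun m =>
      (1 - m) • (1 : Matrix (Fin n) (Fin n) ℝ) + m • (Matrix.of fun _ _ => (1 : ℝ))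
    (∀ K : Fin n → ℝ, (∀ i, 0 < K i) →
      ((∀ i, 0 < (betaOf μ)⁻¹.mulVec K i) ↔
        ∀ i, μ * ∑ j ∈ Finset.univ.erase i, K j < (1 + ((n : ℝ) - 2) * μ) * K i)) ∧
    (∃ ε > 0, ∀ K : Fin n → ℝ, (∀ i, |K i - 1| < ε) →
      ∀ i, 0 < (betaOf μ)⁻¹.mulVec K i) ∧
    (∀ m m' : ℝ, 0 < m → m ≤ m' → m' < 1 → ∀ K : Fin n → ℝ, (∀ i, 0 < K i) →
      (∀ i, 0 < (betaOf m')⁻¹.mulVec K i) → ∀ i, 0 < (betaOf m)⁻¹.mulVec K i) := by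
  intro betaOf
  have hβ : ∀ m, betaOf m = meanFieldMatrix (Fin n) m := fun _ => rfl
  simp only [hβ]
  refine ⟨fun K _ => ?_, exists_pos_forall_abs_sub_lt_mulVec_pos _
    (meanFieldMatrix_inv_mulVec_one_pos hμ0 hμ1), ?_⟩
  · simp only [meanFieldMatrix_inv_mulVec_pos_iff hμ0 hμ1, Fintype.card_fin,
      mul_sum_lt_iff_mul_sum_erase_lt]
  · intro m m' hm hmm' hm' K hK h i
    exact meanFieldMatrix_inv_mulVec_pos_of_le hm.le hmm' hm' (fun j => (hK j).le) (h i)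

/-- Mean-field feasibility: with `β(μ) = (1-μ)I + μJ`, `0 ≤ μ < 1`, a positive
carrying capacity vector `K` yields a strictly positive equilibrium `N* = β⁻¹K`
iff `(1+(n-2)μ) K_i > μ Σ_{j≠i} K_j` for every `i`; small deviations from the
all-ones structural vector are feasible; and the feasible range shrinks as `μ`
increases towards 1. -/
theorem mean_field_feasibility {n : ℕ} (hn : 2 ≤ n) (μ : ℝ)
    (hμ0 : 0 ≤ μ) (hμ1 : μ < 1) :
    let betaOf : ℝ → Matrix (Fin n) (Fin n) ℝ := fun m =>
      (1 - m) • (1 : Matrix (Fin n) (Fin n) ℝ) + m • (Matrix.of fun _ _ => (1 : ℝ))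
    (∀ K : Fin n → ℝ, (∀ i, 0 < K i) →
      ((∀ i, 0 < (betaOf μ)⁻¹.mulVec K i) ↔
        ∀ i, μ * ∑ j ∈ Finset.univ.erase i, K j < (1 + ((n : ℝ) - 2) * μ) * K i)) ∧
    (∃ ε > 0, ∀ K : Fin n → ℝ, (∀ i, |K i - 1| < ε) →
      ∀ i, 0 < (betaOf μ)⁻¹.mulVec K i) ∧
    (∀ m m' : ℝ, 0 < m → m ≤ m' → m' < 1 → ∀ K : Fin n → ℝ, (∀ i, 0 < K i) →
      (∀ i, 0 < (betaOf m')⁻¹.mulVec K i) → ∀ i, 0 < (betaOf m)⁻¹.mulVec K i) :=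
  mean_field_feasibility_general μ hμ0 hμ1
end
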